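/- arXiv:1203.4377 — 2 statements merged into one kernel-verified Lean document; each statement's English description precedes it below -/
import Mathlib

section
/- Let a > 0, let h(t) = sqrt(2ε²(α²+1)t + 1) for fixed ε, α > 0, and let f : [0,∞) → ℝ be continuous with lim_{t→∞} h(t)·f(t) = 0. Then e^{-a h(t)} ∫₀ᵗ f(u) e^{a h(u)} du → 0 as t → ∞. -/
/-! With `E(t) = exp (a h(t))` we have `E' = a h' E = (a c / (2 h)) E` where `c = 2ε²(α²+1)`,
so the integrand `f E = (2 / (a c)) (h f) E'` is `o(E')`. Integrating a little-o against a
nonnegative function with divergent integral preserves the little-o (an integrated ∞/∞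
L'Hôpital rule), hence `∫₀ᵗ f E = o(E(t) - E(0)) = o(E(t))`. -/

open Filter Topology intervalIntegral Asymptotics MeasureTheory

theorem isLittleO_intervalIntegral_of_isLittleO {E : Type*} [NormedAddCommGroup E]
    [NormedSpace ℝ E] {g : ℝ → E} {φ : ℝ → ℝ} {a : ℝ}
    (hg : ∀ t ≥ a, IntervalIntegrable g volume a t)
    (hφ : ∀ t ≥ a, IntervalIntegrable φ volume a t)
    (hφ_nonneg : ∀ᶠ u in atTop, 0 ≤ φ u)
    (hφ_top : Tendsto (fun t ↦ ∫ u in a..t, φ u) atTop atTop) (hgφ : g =o[atTop] φ) :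
    (fun t ↦ ∫ u in a..t, g u) =o[atTop] (fun t ↦ ∫ u in a..t, φ u) := by
  set Φ := fun t ↦ ∫ u in a..t, φ u
  rw [isLittleO_iff]
  intro ε hε
  obtain ⟨T₀, hT₀⟩ := eventually_atTop.1 ((hgφ.bound (half_pos hε)).and hφ_nonneg)
  set T := max T₀ a
  have hTa : a ≤ T := le_max_right _ _
  have htail : ∀ t ≥ T, ‖∫ u in T..t, g u‖ ≤ ε / 2 * (Φ t - Φ T) := fun t ht ↦ calc
    ‖∫ u in T..t, g u‖ ≤ ∫ u in T..t, ε / 2 * φ u := by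
      refine norm_integral_le_of_norm_le ht (ae_of_all _ fun u hu ↦ ?_)
        (((hφ T hTa).symm.trans (hφ t (hTa.trans ht))).const_mul _)
      obtain ⟨hgu, hφu⟩ := hT₀ u ((le_max_left _ _).trans hu.1.le)
      rwa [Real.norm_of_nonneg hφu] at hgu
    _ = ε / 2 * (Φ t - Φ T) := by
      rw [intervalIntegral.integral_const_mul,
        integral_interval_sub_left (hφ t (hTa.trans ht)) (hφ T hTa)]
  filter_upwards [eventually_ge_atTop T, hφ_top.eventually_ge_atTop 0,
    (hφ_top.const_mul_atTop (half_pos hε)).eventually_ge_atTop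
      (‖∫ u in a..T, g u‖ - ε / 2 * Φ T)] with t hTt hΦt hlarge
  rw [Real.norm_of_nonneg hΦt, ← integral_add_adjacent_intervals (hg T hTa)
    ((hg T hTa).symm.trans (hg t (hTa.trans hTt)))]
  calc ‖(∫ u in a..T, g u) + ∫ u in T..t, g u‖
      ≤ ‖∫ u in a..T, g u‖ + ε / 2 * (Φ t - Φ T) :=
        (norm_add_le _ _).trans (by gcongr; exact htail t hTt)
    _ ≤ ε * Φ t := by linarith

theorem tendsto_intervalIntegral_div_of_isLittleO_deriv {g F F' : ℝ → ℝ} {a : ℝ}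
    (hF : ∀ x ≥ a, HasDerivAt F (F' x) x) (hF' : ∀ t ≥ a, IntervalIntegrable F' volume a t)
    (hF'_nonneg : ∀ᶠ x in atTop, 0 ≤ F' x) (hF_top : Tendsto F atTop atTop)
    (hg : ∀ t ≥ a, IntervalIntegrable g volume a t) (hgF' : g =o[atTop] F') :
    Tendsto (fun t ↦ (∫ u in a..t, g u) / F t) atTop (𝓝 0) := by
  have hFTC : ∀ᶠ t in atTop, ∫ u in a..t, F' u = F t - F a := by
    filter_upwards [eventually_ge_atTop a] with t ht
    refine integral_eq_sub_of_hasDerivAt (fun x hx ↦ hF x ?_) (hF' t ht)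
    rw [Set.uIcc_of_le ht] at hx
    exact hx.1
  have hF'_top : Tendsto (fun t ↦ ∫ u in a..t, F' u) atTop atTop :=
    (tendsto_atTop_add_const_right _ (-F a) hF_top).congr' <| by
      filter_upwards [hFTC] with t ht
      rw [ht, sub_eq_add_neg]
  have hF'_isBigO : (fun t ↦ ∫ u in a..t, F' u) =O[atTop] F :=
    ((isBigO_refl F atTop).sub (isLittleO_const_left.2 <| Or.inr <|
      tendsto_norm_atTop_atTop.comp hF_top).isBigO).congr' (hFTC.mono fun _ ht ↦ ht.symm) (by rfl)
  exact ((isLittleO_intervalIntegral_of_isLittleO hg hF' hF'_nonneg hF'_top hgF').trans_isBigO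
    hF'_isBigO).tendsto_div_nhds_zero

theorem hasDerivAt_exp_mul_sqrt_mul_add_one {a c x : ℝ} (hx : 0 < c * x + 1) :
    HasDerivAt (fun t ↦ Real.exp (a * √(c * t + 1)))
      (a * (c / (2 * √(c * x + 1))) * Real.exp (a * √(c * x + 1))) x := by
  convert ((((hasDerivAt_id' x).const_mul c).add_const 1).sqrt hx.ne').const_mul a |>.exp
    using 1
  ring

theorem tendsto_exp_mul_sqrt_mul_add_one_atTop {a c : ℝ} (ha : 0 < a) (hc : 0 < c) :
    Tendsto (fun t ↦ Real.exp (a * √(c * t + 1))) atTop atTop :=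
  Real.tendsto_exp_atTop.comp <| (Real.tendsto_sqrt_atTop.comp <|
    tendsto_atTop_add_const_right _ 1 <| tendsto_id.const_mul_atTop hc).const_mul_atTop ha

theorem exp_weighted_integral_tendsto_zero_general (a ε α : ℝ) (ha : 0 < a) (hε : 0 < ε)
    (f : ℝ → ℝ) (hf : ContinuousOn f (Set.Ici 0))
    (hlim : Tendsto (fun t : ℝ => Real.sqrt (2 * ε ^ 2 * (α ^ 2 + 1) * t + 1) * f t)
      atTop (nhds 0)) :
    Tendsto (fun t : ℝ =>
        Real.exp (-a * Real.sqrt (2 * ε ^ 2 * (α ^ 2 + 1) * t + 1)) *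
          ∫ u in (0:ℝ)..t, f u * Real.exp (a * Real.sqrt (2 * ε ^ 2 * (α ^ 2 + 1) * u + 1)))
      atTop (nhds 0) := by
  set c := 2 * ε ^ 2 * (α ^ 2 + 1)
  have hc : 0 < c := by positivity
  have hsqrt_pos : ∀ x ≥ 0, 0 < √(c * x + 1) := fun x hx ↦ Real.sqrt_pos.2 (by positivity)
  set F' : ℝ → ℝ := fun x ↦ a * (c / (2 * √(c * x + 1))) * Real.exp (a * √(c * x + 1))
  have hF'_cont : ContinuousOn F' (Set.Ici 0) := by
    fun_prop (disch := intro x hx; exact (mul_pos two_pos (hsqrt_pos x hx)).ne')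
  have hintegrable : ∀ {φ : ℝ → ℝ}, ContinuousOn φ (Set.Ici 0) →
      ∀ t ≥ 0, IntervalIntegrable φ volume 0 t := fun hφ t ht ↦
    (hφ.mono (by simp [Set.uIcc_of_le ht, Set.Icc_subset_Ici_self])).intervalIntegrable
  have hintegrand : (fun u ↦ f u * Real.exp (a * √(c * u + 1))) =o[atTop] F' := by
    have hsmall : Tendsto (fun u ↦ 2 / (a * c) * (√(c * u + 1) * f u)) atTop (𝓝 0) := by
      simpa using hlim.const_mul (2 / (a * c))
    refine (((isLittleO_one_iff ℝ).2 hsmall).mul_isBigO (isBigO_refl F' atTop)).congr' ?_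
      (by simp only [one_mul, EventuallyEq.rfl])
    filter_upwards [eventually_ge_atTop 0] with u hu
    have := hsqrt_pos u hu
    simp only [F']
    field_simp
  have := tendsto_intervalIntegral_div_of_isLittleO_deriv
    (fun x hx ↦ hasDerivAt_exp_mul_sqrt_mul_add_one (by positivity)) (hintegrable hF'_cont)
    (eventually_ge_atTop 0 |>.mono fun x hx ↦ by have := hsqrt_pos x hx; positivity)
    (tendsto_exp_mul_sqrt_mul_add_one_atTop ha hc) (hintegrable (hf.mul (by fun_prop)))
    hintegrand
  simpa only [Pi.mul_apply, neg_mul, Real.exp_neg, div_eq_inv_mul] using this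

/-- With `h(t) = sqrt(2ε²(α²+1)t + 1)` (`ε, α > 0`), `a > 0` and `f` continuous on
`[0,∞)` with `h(t) f(t) → 0`, we have
`e^{-a h(t)} ∫₀ᵗ f(u) e^{a h(u)} du → 0` as `t → ∞`. -/
theorem exp_weighted_integral_tendsto_zero (a ε α : ℝ) (ha : 0 < a) (hε : 0 < ε) (hα : 0 < α)
    (f : ℝ → ℝ) (hf : ContinuousOn f (Set.Ici 0))
    (hlim : Tendsto (fun t : ℝ => Real.sqrt (2 * ε ^ 2 * (α ^ 2 + 1) * t + 1) * f t)
      atTop (nhds 0)) :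
    Tendsto (fun t : ℝ =>
        Real.exp (-a * Real.sqrt (2 * ε ^ 2 * (α ^ 2 + 1) * t + 1)) *
          ∫ u in (0:ℝ)..t, f u * Real.exp (a * Real.sqrt (2 * ε ^ 2 * (α ^ 2 + 1) * u + 1)))
      atTop (nhds 0) :=
  exp_weighted_integral_tendsto_zero_general a ε α ha hε f hf hlim
end

section
/- For A(x) = α I - α x x* - L(x) with x ∈ ℝ³, the Itô–Stratonovich correction term Σ_{j=1}^3 (D_j A)(x) A(x)* e_j equals -2(α²+1)x when |x| = 1, where D_j denotes the partial derivative in the j-th coordinate of x and e_j the j-th canonical basis vector. -/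
open Matrix

/-- The cross-product matrix of `x ∈ ℝ³`. -/
def crossMat (x : Fin 3 → ℝ) : Matrix (Fin 3) (Fin 3) ℝ :=
  !![0, -x 2, x 1; x 2, 0, -x 0; -x 1, x 0, 0]

/-- The `j`-th canonical basis vector of `ℝ³`. -/
def e3 (j : Fin 3) : Fin 3 → ℝ := Pi.single j 1

/-- The `j`-th partial derivative of `x ↦ A(x) = α I - α x x* - L(x)`:
`D_j A (x) = -α (e_j x* + x e_j*) - L(e_j)`. -/
def DAmat (α : ℝ) (x : Fin 3 → ℝ) (j : Fin 3) : Matrix (Fin 3) (Fin 3) ℝ :=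
  -α • (vecMulVec (e3 j) x + vecMulVec x (e3 j)) - crossMat (e3 j)

/-!
Write `A(x)* e_j = α e_j - α x_j x - e_j × x` and `D_j A(x) v = -α ((x · v) e_j + v_j x) - e_j × v`.
For unit `x` each `A(x)* e_j` is orthogonal to `x`, so the first term drops out; the diagonal
entries of `A(x)*` sum to `α (3 - |x|²) = 2α`; and `Σ_j e_j × A(x)* e_j = -α x × x - Σ_j e_j × (e_j × x)
= 2x` by the triple product expansion.
-/

lemma crossMat_mulVec (x y : Fin 3 → ℝ) : crossMat x *ᵥ y = x ⨯₃ y := by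
  ext i
  fin_cases i <;> simp [crossMat, cross_apply, mulVec, vecHead, vecTail] <;> ring

lemma e3_dotProduct (j : Fin 3) (v : Fin 3 → ℝ) : e3 j ⬝ᵥ v = v j := by
  simp [e3, single_dotProduct]

lemma sum_smul_e3 (x : Fin 3 → ℝ) : ∑ j, x j • e3 j = x :=
  (pi_eq_sum_univ' x).symm

lemma sum_smul_e3_cross (c x : Fin 3 → ℝ) : ∑ j, c j • e3 j ⨯₃ x = c ⨯₃ x := by
  conv_rhs => rw [← sum_smul_e3 c]
  simp only [map_sum, map_smul, LinearMap.sum_apply, LinearMap.smul_apply]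

lemma sum_e3_cross_e3_cross (x : Fin 3 → ℝ) : ∑ j, e3 j ⨯₃ (e3 j ⨯₃ x) = -(2 : ℝ) • x := by
  have hunit (j : Fin 3) : e3 j ⬝ᵥ e3 j = 1 := by simp [e3]
  simp only [cross_cross_eq_smul_sub_smul', e3_dotProduct, hunit, one_smul,
    Finset.sum_sub_distrib, sum_smul_e3, Finset.sum_const, Finset.card_univ, Fintype.card_fin]
  module

lemma DAmat_mulVec (α : ℝ) (x v : Fin 3 → ℝ) (j : Fin 3) :
    DAmat α x j *ᵥ v = -α • ((x ⬝ᵥ v) • e3 j + v j • x) - e3 j ⨯₃ v := by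
  simp only [DAmat, sub_mulVec, smul_mulVec, add_mulVec, vecMulVec_mulVec, op_smul_eq_smul,
    e3_dotProduct, crossMat_mulVec]

/-- `A(x)* e_j` for `A(x) = α I - α x x* - L(x)`. -/
def adjointCol (α : ℝ) (x : Fin 3 → ℝ) (j : Fin 3) : Fin 3 → ℝ :=
  α • e3 j - (α * x j) • x - crossMat (e3 j) *ᵥ x

lemma dotProduct_adjointCol (α : ℝ) (x : Fin 3 → ℝ) (j : Fin 3) :
    x ⬝ᵥ adjointCol α x j = α * x j * (1 - x ⬝ᵥ x) := by
  simp only [adjointCol, crossMat_mulVec, dotProduct_sub, dotProduct_smul, dot_cross_self,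
    dotProduct_comm x (e3 j), e3_dotProduct, smul_eq_mul]
  ring

lemma sum_adjointCol_apply_self (α : ℝ) (x : Fin 3 → ℝ) :
    ∑ j, adjointCol α x j j = α * (3 - x ⬝ᵥ x) := by
  have he (j : Fin 3) : e3 j j = 1 := Pi.single_eq_same j 1
  have hcross (j : Fin 3) : (e3 j ⨯₃ x) j = 0 := by
    rw [← e3_dotProduct j (e3 j ⨯₃ x), dot_self_cross]
  simp only [adjointCol, crossMat_mulVec, Pi.sub_apply, Pi.smul_apply, smul_eq_mul, he, hcross,
    mul_one, sub_zero, Finset.sum_sub_distrib, Finset.sum_const, Finset.card_univ,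
    Fintype.card_fin, nsmul_eq_mul, Nat.cast_ofNat, dotProduct, mul_assoc]
  rw [mul_sub, Finset.mul_sum, mul_comm]

lemma sum_e3_cross_adjointCol (α : ℝ) (x : Fin 3 → ℝ) :
    ∑ j, e3 j ⨯₃ adjointCol α x j = (2 : ℝ) • x := by
  simp only [adjointCol, crossMat_mulVec, map_sub, map_smul, cross_self, smul_zero, zero_sub,
    Finset.sum_sub_distrib, Finset.sum_neg_distrib, sum_e3_cross_e3_cross, ← smul_smul,
    ← Finset.smul_sum, sum_smul_e3_cross]
  module

/-- The Itô–Stratonovich correction term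
`Σ_j (D_j A)(x) (α e_j - α x_j x - L(e_j) x)` equals `-2(α²+1) x` for unit `x`. -/
theorem strato_correction (α : ℝ) (x : Fin 3 → ℝ) (hx : x ⬝ᵥ x = 1) :
    (∑ j : Fin 3, (DAmat α x j).mulVec
        (α • e3 j - (α * x j) • x - (crossMat (e3 j)).mulVec x))
      = -(2 * (α ^ 2 + 1)) • x := by
  change ∑ j, DAmat α x j *ᵥ adjointCol α x j = _
  have hdot (j : Fin 3) : x ⬝ᵥ adjointCol α x j = 0 := by
    rw [dotProduct_adjointCol, hx, sub_self, mul_zero]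
  calc ∑ j, DAmat α x j *ᵥ adjointCol α x j
      = -α • ((∑ j, adjointCol α x j j) • x) - ∑ j, e3 j ⨯₃ adjointCol α x j := by
        simp only [DAmat_mulVec, hdot, zero_smul, zero_add, Finset.sum_sub_distrib,
          ← Finset.smul_sum, ← Finset.sum_smul]
    _ = -(2 * (α ^ 2 + 1)) • x := by
        rw [sum_adjointCol_apply_self, hx, sum_e3_cross_adjointCol]
        module
end
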